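/- Suppose the conditional product measures π_{L,N} with weights w satisfying w(n−1)/w(n) → φ_c ∈ (0,∞] exhibit condensation (lim_{K→∞} lim_{N→∞} π_{L,N}[M_L ≥ N−K] = 1). Then φ_c < ∞, z(φ_c) = Σ_n w(n)φ_c^n < ∞, and Z_{L,N}/w(N) → L z(φ_c)^{L−1} as N → ∞. -/

import Mathlib

open Filter Topology

/-- `L`-fold convolution of the weights: `Z_{L,N} = Σ_{η ∈ ℕ^L, Ση = N} Π_x w(η_x)`. -/
noncomputable def Zconv (w : ℕ → ℝ) (L N : ℕ) : ℝ :=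
  ∑ η ∈ Finset.Nat.antidiagonalTuple L N, ∏ x, w (η x)

/-- Probability under `π_{L,N}` that the maximum occupation number is at least `N - K`. -/
noncomputable def probMaxGe (w : ℕ → ℝ) (L N K : ℕ) : ℝ :=
  (∑ η ∈ Finset.Nat.antidiagonalTuple L N,
      if N - K ≤ Finset.univ.sup η then ∏ x, w (η x) else 0) / Zconv w L N

/-!
Write `Z_l = Zconv w l` and `L = l + 1`. Once `2K < N`, at most one site can carry `N - K`
particles, so `π_{L,N}[M_L ≥ N - K] = L Σ_{m ≤ K} w(N - m) Z_l(m) / Z_L(N)`.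

If `w(n)/w(n+1) → ∞`, every term of this sum is negligible against
`w(N - K - 1) Z_l(K + 1) ≤ Z_L(N)`, so all the limits `a K` vanish, contradicting `a K → 1`.
If instead the ratio tends to `φ < ∞`, then `w(N - m)/w(N) → φ^m`; the case `K = 0` shows that
`c = lim w(N)/Z_L(N)` exists, and then `a K = L c Σ_{m ≤ K} Z_l(m) φ^m`. Letting `K → ∞` forces
`c ≠ 0` and `Σ_m Z_l(m) φ^m = 1/(L c)`. This series dominates `z(φ) = Σ_n w(n) φ^n`, and as the
generating function of an `l`-fold convolution it equals `z(φ)^l`; hence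
`Z_L(N)/w(N) → 1/c = L z(φ)^l`.
-/

open Finset

lemma tendsto_add_div_pow {f : ℕ → ℝ} (hf : ∀ n, f n ≠ 0) {r : ℝ}
    (h : Tendsto (fun n => f (n + 1) / f n) atTop (𝓝 r)) (d : ℕ) :
    Tendsto (fun n => f (n + d) / f n) atTop (𝓝 (r ^ d)) := by
  induction d with
  | zero => simp [div_self (hf _)]
  | succ d ih =>
    rw [pow_succ']
    refine ((h.comp (tendsto_add_atTop_nat d)).mul ih).congr fun n => ?_
    simp [← add_assoc, div_mul_div_cancel₀ (hf _)]

lemma hasSum_inv_of_tendsto_mul_sum {f : ℕ → ℝ} (hf : ∀ n, 0 ≤ f n) {c : ℝ}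
    (h : Tendsto (fun K => c * ∑ m ∈ range (K + 1), f m) atTop (𝓝 1)) :
    c ≠ 0 ∧ HasSum f c⁻¹ := by
  have hc : c ≠ 0 := by
    rintro rfl
    simp only [zero_mul] at h
    exact zero_ne_one (tendsto_nhds_unique tendsto_const_nhds h)
  refine ⟨hc, (hasSum_iff_tendsto_nat_of_nonneg hf _).2 ?_⟩
  rw [← tendsto_add_atTop_iff_nat 1]
  simpa [hc] using h.const_mul c⁻¹

lemma Zconv_nonneg {w : ℕ → ℝ} (hw : ∀ n, 0 ≤ w n) (L N : ℕ) : 0 ≤ Zconv w L N :=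
  sum_nonneg fun _ _ => prod_nonneg fun _ _ => hw _

lemma Zconv_pos {w : ℕ → ℝ} (hw : ∀ n, 0 < w n) {L : ℕ} (hL : L ≠ 0) (N : ℕ) : 0 < Zconv w L N := by
  refine sum_pos (fun _ _ => prod_pos fun _ _ => hw _) ⟨Pi.single ⟨0, by omega⟩ N, ?_⟩
  simp [Nat.mem_antidiagonalTuple]

lemma Zconv_zero_left (w : ℕ → ℝ) (N : ℕ) : Zconv w 0 N = if N = 0 then 1 else 0 := by
  cases N <;> simp [Zconv, Nat.antidiagonalTuple_zero_succ]

lemma Zconv_zero_right (w : ℕ → ℝ) (L : ℕ) : Zconv w L 0 = w 0 ^ L := by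
  simp [Zconv, Nat.antidiagonalTuple_zero_right]

lemma apply_le_of_mem_antidiagonalTuple {L N : ℕ} {η : Fin L → ℕ}
    (hη : η ∈ Nat.antidiagonalTuple L N) (x : Fin L) : η x ≤ N :=
  (Nat.mem_antidiagonalTuple.1 hη) ▸ single_le_sum (fun _ _ => Nat.zero_le _) (mem_univ x)

lemma apply_add_apply_le_of_mem_antidiagonalTuple {L N : ℕ} {η : Fin L → ℕ}
    (hη : η ∈ Nat.antidiagonalTuple L N) {x y : Fin L} (hxy : x ≠ y) : η x + η y ≤ N := by
  rw [← Nat.mem_antidiagonalTuple.1 hη, ← sum_pair hxy]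
  exact sum_le_sum_of_subset (subset_univ _)

lemma sum_filter_apply_eq_mul_Zconv (w : ℕ → ℝ) {l N v : ℕ} (x : Fin (l + 1)) (hv : v ≤ N) :
    ∑ η ∈ (Nat.antidiagonalTuple (l + 1) N).filter (fun η => η x = v), ∏ y, w (η y) =
      w v * Zconv w l (N - v) := by
  rw [Zconv, mul_sum]
  refine sum_nbij' x.removeNth (x.insertNth (α := fun _ => ℕ) v) ?_ ?_ ?_ ?_ ?_
  · intro η hη
    simp only [mem_filter, Nat.mem_antidiagonalTuple] at hη ⊢
    have := Fin.sum_univ_succAbove η x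
    simp only [Fin.removeNth]
    omega
  · intro ζ hζ
    simp only [mem_filter, Nat.mem_antidiagonalTuple] at hζ ⊢
    simp [Fin.sum_univ_succAbove _ x, hζ, hv]
  · intro η hη
    simp only [mem_filter] at hη
    simp [← hη.2]
  · intro ζ _
    simp
  · intro η hη
    simp only [mem_filter] at hη
    simp [Fin.prod_univ_succAbove _ x, hη.2, Fin.removeNth]

lemma sum_filter_apply_mem_eq_sum_mul_Zconv (w : ℕ → ℝ) {l N : ℕ} (x : Fin (l + 1))
    {t : Finset ℕ} (ht : ∀ v ∈ t, v ≤ N) :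
    ∑ η ∈ (Nat.antidiagonalTuple (l + 1) N).filter (fun η => η x ∈ t), ∏ y, w (η y) =
      ∑ v ∈ t, w v * Zconv w l (N - v) := by
  rw [← sum_fiberwise_of_maps_to (s := (Nat.antidiagonalTuple (l + 1) N).filter (fun η => η x ∈ t))
    (g := (· x)) fun η hη => (mem_filter.1 hη).2]
  refine sum_congr rfl fun v hv => ?_
  rw [filter_filter, ← sum_filter_apply_eq_mul_Zconv w x (ht v hv)]
  congr 1
  exact filter_congr fun η _ => ⟨And.right, fun h => ⟨h ▸ hv, h⟩⟩

lemma Zconv_succ (w : ℕ → ℝ) (l N : ℕ) :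
    Zconv w (l + 1) N = ∑ v ∈ range (N + 1), w v * Zconv w l (N - v) := by
  rw [← sum_filter_apply_mem_eq_sum_mul_Zconv w 0 fun v hv => Nat.lt_succ_iff.1 (mem_range.1 hv),
    Zconv, filter_true_of_mem fun η hη =>
      mem_range.2 (Nat.lt_succ_of_le (apply_le_of_mem_antidiagonalTuple hη 0))]

lemma mul_Zconv_le_Zconv_succ {w : ℕ → ℝ} (hw : ∀ n, 0 ≤ w n) {l N v : ℕ} (hv : v ≤ N) :
    w v * Zconv w l (N - v) ≤ Zconv w (l + 1) N := by
  rw [Zconv_succ]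
  exact single_le_sum (f := fun v => w v * Zconv w l (N - v))
    (fun _ _ => mul_nonneg (hw _) (Zconv_nonneg hw _ _)) (mem_range.2 (by omega))

lemma hasSum_Zconv_mul_pow {w : ℕ → ℝ} (hw : ∀ n, 0 ≤ w n) {φ : ℝ} (hφ : 0 ≤ φ)
    (hz : Summable fun n => w n * φ ^ n) (l : ℕ) :
    HasSum (fun N => Zconv w l N * φ ^ N) ((∑' n, w n * φ ^ n) ^ l) := by
  induction l with
  | zero =>
    simp only [Zconv_zero_left, pow_zero]
    convert hasSum_ite_eq 0 (1 : ℝ) using 2 with N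
    split_ifs <;> simp_all
  | succ l ih =>
    have hz' : Summable fun n => ‖w n * φ ^ n‖ := by
      simpa [abs_of_nonneg (hw _), abs_of_nonneg hφ] using hz
    have ih' : Summable fun N => ‖Zconv w l N * φ ^ N‖ := by
      simpa [abs_of_nonneg (Zconv_nonneg hw _ _), abs_of_nonneg hφ] using ih.summable
    have hcauchy : (fun N => Zconv w (l + 1) N * φ ^ N) =
        fun N => ∑ v ∈ range (N + 1), w v * φ ^ v * (Zconv w l (N - v) * φ ^ (N - v)) := by
      funext N
      rw [Zconv_succ, sum_mul]
      refine sum_congr rfl fun v hv => ?_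
      rw [← pow_mul_pow_sub φ (Nat.lt_succ_iff.1 (mem_range.1 hv))]
      ring
    rw [pow_succ', ← ih.tsum_eq, tsum_mul_tsum_eq_tsum_sum_range_of_summable_norm hz' ih', hcauchy]
    exact (summable_norm_sum_mul_range_of_summable_norm hz' ih').of_norm.hasSum

lemma sum_ite_le_apply_eq (w : ℕ → ℝ) {l N K : ℕ} (x : Fin (l + 1)) (hK : K ≤ N) :
    ∑ η ∈ Nat.antidiagonalTuple (l + 1) N, (if N - K ≤ η x then ∏ y, w (η y) else 0) =
      ∑ m ∈ range (K + 1), w (N - m) * Zconv w l m := by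
  have hinj : Set.InjOn (N - ·) (range (K + 1)) := fun a ha b hb h => by
    simp only [coe_range, Set.mem_Iio] at ha hb
    simp only at h
    omega
  have hmem : ∀ η ∈ Nat.antidiagonalTuple (l + 1) N,
      N - K ≤ η x ↔ η x ∈ (range (K + 1)).image (N - ·) := fun η hη => by
    have := apply_le_of_mem_antidiagonalTuple hη x
    simp only [mem_image, mem_range]
    exact ⟨fun h => ⟨N - η x, by omega, by omega⟩, fun ⟨m, hm, hmx⟩ => by omega⟩
  calc _ = ∑ η ∈ (Nat.antidiagonalTuple (l + 1) N).filter
        (fun η => η x ∈ (range (K + 1)).image (N - ·)),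
        ∏ y, w (η y) := by rw [← sum_filter, filter_congr hmem]
    _ = ∑ v ∈ (range (K + 1)).image (N - ·), w v * Zconv w l (N - v) :=
        sum_filter_apply_mem_eq_sum_mul_Zconv w x fun v hv => by simp only [mem_image] at hv; omega
    _ = _ := by
        rw [sum_image hinj]
        exact sum_congr rfl fun m hm => by rw [Nat.sub_sub_self (by simp at hm; omega)]

lemma ite_le_sup_eq_sum_ite {L N K : ℕ} {η : Fin L → ℕ}
    (hη : η ∈ Nat.antidiagonalTuple L N) (hK : 2 * K < N) (P : ℝ) :
    (if N - K ≤ univ.sup η then P else 0) = ∑ x, if N - K ≤ η x then P else 0 := by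
  by_cases h : N - K ≤ univ.sup η
  · obtain ⟨x₀, -, hx₀⟩ := (Finset.le_sup_iff (by simp only [Nat.bot_eq_zero]; omega)).1 h
    rw [if_pos h, sum_eq_single x₀ (fun x _ hx => if_neg ?_) (by simp), if_pos hx₀]
    have := apply_add_apply_le_of_mem_antidiagonalTuple hη hx
    omega
  · rw [if_neg h]
    exact (sum_eq_zero fun x _ => if_neg fun hx => h (hx.trans (le_sup (mem_univ x)))).symm

lemma probMaxGe_eq (w : ℕ → ℝ) {l N K : ℕ} (hK : 2 * K < N) :
    probMaxGe w (l + 1) N K =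
      (l + 1) * (∑ m ∈ range (K + 1), w (N - m) * Zconv w l m) / Zconv w (l + 1) N := by
  rw [probMaxGe, sum_congr rfl fun η hη => ite_le_sup_eq_sum_ite hη hK _, sum_comm,
    sum_congr rfl fun x _ => sum_ite_le_apply_eq w x (by omega), sum_const, card_univ,
    Fintype.card_fin, nsmul_eq_mul]
  push_cast
  rfl

lemma probMaxGe_nonneg {w : ℕ → ℝ} (hw : ∀ n, 0 ≤ w n) (L N K : ℕ) : 0 ≤ probMaxGe w L N K :=
  div_nonneg (sum_nonneg fun _ _ => by split_ifs; exacts [prod_nonneg fun _ _ => hw _, le_rfl])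
    (Zconv_nonneg hw L N)

lemma tendsto_sub_div_pow {w : ℕ → ℝ} (hw : ∀ n, 0 < w n) {φ : ℝ}
    (hφ : Tendsto (fun n => w n / w (n + 1)) atTop (𝓝 φ)) (m : ℕ) :
    Tendsto (fun N => w (N - m) / w N) atTop (𝓝 (φ ^ m)) := by
  have := tendsto_add_div_pow (f := fun n => (w n)⁻¹) (fun n => inv_ne_zero (hw n).ne')
    (by simpa only [inv_div_inv] using hφ) m
  refine (this.comp (tendsto_sub_atTop_nat m)).congr' ?_
  filter_upwards [eventually_ge_atTop m] with N hN
  simp only [Function.comp_apply, Nat.sub_add_cancel hN, inv_div_inv]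

lemma tendsto_add_div_zero {w : ℕ → ℝ} (hw : ∀ n, 0 < w n)
    (h : Tendsto (fun n => w n / w (n + 1)) atTop atTop) {d : ℕ} (hd : d ≠ 0) :
    Tendsto (fun n => w (n + d) / w n) atTop (𝓝 0) := by
  have := tendsto_add_div_pow (fun n => (hw n).ne')
    (by simpa only [Function.comp_def, inv_div] using tendsto_inv_atTop_zero.comp h) d
  rwa [zero_pow hd] at this

lemma tendsto_probMaxGe_zero_of_tendsto_atTop {w : ℕ → ℝ} (hw : ∀ n, 0 < w n) {l : ℕ} (hl : l ≠ 0)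
    (h : Tendsto (fun n => w n / w (n + 1)) atTop atTop) (K : ℕ) :
    Tendsto (fun N => probMaxGe w (l + 1) N K) atTop (𝓝 0) := by
  rw [← tendsto_add_atTop_iff_nat (K + 1)]
  have hZ : 0 < Zconv w l (K + 1) := Zconv_pos hw hl _
  have hratio : Tendsto (fun M => (l + 1) / Zconv w l (K + 1) *
      ∑ m ∈ range (K + 1), w (M + (K + 1) - m) / w M * Zconv w l m) atTop (𝓝 0) := by
    rw [← mul_zero ((l + 1) / Zconv w l (K + 1)), ← sum_const_zero (s := range (K + 1)) (M := ℝ)]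
    refine tendsto_const_nhds.mul (tendsto_finsetSum _ fun m hm => ?_)
    have hmK : m < K + 1 := mem_range.1 hm
    rw [← zero_mul (Zconv w l m)]
    refine ((tendsto_add_div_zero hw h (d := K + 1 - m) (by omega)).mul_const _).congr
      fun M => ?_
    rw [show M + (K + 1) - m = M + (K + 1 - m) by omega]
  refine squeeze_zero' (.of_forall fun _ => probMaxGe_nonneg (fun n => (hw n).le) _ _ _)
    ((eventually_ge_atTop K).mono fun M hM => ?_) hratio
  have hZM : w M * Zconv w l (K + 1) ≤ Zconv w (l + 1) (M + (K + 1)) := by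
    simpa using mul_Zconv_le_Zconv_succ (fun n => (hw n).le) (l := l) (Nat.le_add_right M (K + 1))
  rw [probMaxGe_eq w (by omega)]
  calc _ ≤ (l + 1) * (∑ m ∈ range (K + 1), w (M + (K + 1) - m) * Zconv w l m) /
        (w M * Zconv w l (K + 1)) :=
        div_le_div_of_nonneg_left (mul_nonneg (by positivity) (sum_nonneg fun _ _ =>
          mul_nonneg (hw _).le (Zconv_nonneg (fun n => (hw n).le) _ _))) (mul_pos (hw M) hZ) hZM
    _ = _ := by
        rw [mul_div_assoc, sum_div, mul_sum, mul_sum]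
        refine sum_congr rfl fun m _ => ?_
        field_simp [(hw M).ne', hZ.ne']

lemma tendsto_div_Zconv_of_tendsto_probMaxGe {w : ℕ → ℝ} (hw : ∀ n, 0 < w n) {l : ℕ} {a₀ : ℝ}
    (h : Tendsto (fun N => probMaxGe w (l + 1) N 0) atTop (𝓝 a₀)) :
    Tendsto (fun N => w N / Zconv w (l + 1) N) atTop (𝓝 (a₀ / ((l + 1) * w 0 ^ l))) := by
  refine (h.div_const _).congr' ?_
  filter_upwards [eventually_gt_atTop 0] with N hN
  have := (hw 0).ne'
  rw [probMaxGe_eq w (by omega), sum_range_one, Nat.sub_zero, Zconv_zero_right]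
  field_simp

lemma tendsto_probMaxGe {w : ℕ → ℝ} (hw : ∀ n, 0 < w n) {l : ℕ} {φ : ℝ}
    (hφ : Tendsto (fun n => w n / w (n + 1)) atTop (𝓝 φ)) {c : ℝ}
    (hc : Tendsto (fun N => w N / Zconv w (l + 1) N) atTop (𝓝 c)) (K : ℕ) :
    Tendsto (fun N => probMaxGe w (l + 1) N K) atTop
      (𝓝 ((l + 1) * c * ∑ m ∈ range (K + 1), Zconv w l m * φ ^ m)) := by
  have hsum := tendsto_finsetSum (range (K + 1)) fun m _ =>
    (tendsto_sub_div_pow hw hφ m).const_mul (Zconv w l m)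
  refine ((tendsto_const_nhds.mul hc).mul hsum).congr' ?_
  filter_upwards [eventually_gt_atTop (2 * K)] with N hN
  rw [probMaxGe_eq w hN, mul_sum, mul_div_assoc, sum_div, mul_sum]
  refine sum_congr rfl fun m _ => ?_
  field_simp [(hw N).ne']

lemma summable_mul_pow_of_summable_Zconv {w : ℕ → ℝ} (hw : ∀ n, 0 < w n) {φ : ℝ}
    (hφ : 0 ≤ φ) {l : ℕ} (h : Summable fun N => Zconv w (l + 1) N * φ ^ N) :
    Summable fun n => w n * φ ^ n := by
  have hZ : 0 < Zconv w l 0 := by rw [Zconv_zero_right]; exact pow_pos (hw 0) l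
  refine (h.div_const (Zconv w l 0)).of_nonneg_of_le
    (fun n => mul_nonneg (hw n).le (pow_nonneg hφ n)) fun n => ?_
  have hwZ : w n * Zconv w l 0 ≤ Zconv w (l + 1) n := by
    simpa using mul_Zconv_le_Zconv_succ (fun n => (hw n).le) (l := l) (le_refl n)
  rw [le_div_iff₀ hZ, mul_right_comm]
  exact mul_le_mul_of_nonneg_right hwZ (pow_nonneg hφ n)

theorem summable_and_tendsto_Zconv_div_of_condensation {w : ℕ → ℝ} (hw : ∀ n, 0 < w n)
    {l : ℕ} (hl : l ≠ 0) {φ : ℝ} (hφ0 : 0 ≤ φ)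
    (hφ : Tendsto (fun n => w n / w (n + 1)) atTop (𝓝 φ)) {a : ℕ → ℝ}
    (ha : ∀ K, Tendsto (fun N => probMaxGe w (l + 1) N K) atTop (𝓝 (a K)))
    (ha1 : Tendsto a atTop (𝓝 1)) :
    Summable (fun n => w n * φ ^ n) ∧
      Tendsto (fun N => Zconv w (l + 1) N / w N) atTop
        (𝓝 ((l + 1) * (∑' n, w n * φ ^ n) ^ l)) := by
  have hc := tendsto_div_Zconv_of_tendsto_probMaxGe hw (ha 0)
  set c := a 0 / ((l + 1) * w 0 ^ l)
  have haK : ∀ K, (l + 1) * c * ∑ m ∈ range (K + 1), Zconv w l m * φ ^ m = a K := fun K =>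
    tendsto_nhds_unique (tendsto_probMaxGe hw hφ hc K) (ha K)
  obtain ⟨hc0, hS⟩ := hasSum_inv_of_tendsto_mul_sum
    (fun m => mul_nonneg (Zconv_nonneg (fun n => (hw n).le) l m) (pow_nonneg hφ0 m))
    (ha1.congr fun K => (haK K).symm)
  obtain ⟨k, rfl⟩ := Nat.exists_eq_succ_of_ne_zero hl
  have hz := summable_mul_pow_of_summable_Zconv hw hφ0 hS.summable
  refine ⟨hz, ?_⟩
  rw [(hasSum_Zconv_mul_pow (fun n => (hw n).le) hφ0 hz (k + 1)).unique hS]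
  convert hc.inv₀ (right_ne_zero_of_mul hc0) using 1
  · simp only [inv_div]
  · field_simp

theorem condensation_characterization_general (w : ℕ → ℝ) (hw : ∀ n, 0 < w n)
    (φc : ENNReal)
    (hreg : Tendsto (fun n => ENNReal.ofReal (w n / w (n + 1))) atTop (𝓝 φc))
    (L : ℕ) (hL : 2 ≤ L)
    (hcond : ∃ a : ℕ → ℝ,
      (∀ K : ℕ, Tendsto (fun N => probMaxGe w L N K) atTop (𝓝 (a K))) ∧
      Tendsto a atTop (𝓝 1)) :
    φc < ⊤ ∧
    (Summable fun n : ℕ => w n * φc.toReal ^ n) ∧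
    Tendsto (fun N => Zconv w L N / w N) atTop
      (𝓝 ((L : ℝ) * (∑' n : ℕ, w n * φc.toReal ^ n) ^ (L - 1))) := by
  obtain ⟨a, ha, ha1⟩ := hcond
  obtain ⟨l, rfl⟩ : ∃ l, L = l + 1 := ⟨L - 1, by omega⟩
  have hl : l ≠ 0 := by omega
  have hφc : φc ≠ ⊤ := by
    rintro rfl
    have ha0 : a = 0 := funext fun K => tendsto_nhds_unique (ha K)
      (tendsto_probMaxGe_zero_of_tendsto_atTop hw hl (ENNReal.tendsto_ofReal_nhds_top.1 hreg) K)
    exact zero_ne_one (tendsto_nhds_unique tendsto_const_nhds (ha0 ▸ ha1))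
  have hφ : Tendsto (fun n => w n / w (n + 1)) atTop (𝓝 φc.toReal) := by
    refine ((ENNReal.tendsto_toReal hφc).comp hreg).congr fun n => ?_
    exact ENNReal.toReal_ofReal (div_nonneg (hw n).le (hw (n + 1)).le)
  obtain ⟨hz, hZ⟩ :=
    summable_and_tendsto_Zconv_div_of_condensation hw hl ENNReal.toReal_nonneg hφ ha ha1
  exact ⟨hφc.lt_top, hz, by simpa using hZ⟩

/-- If the conditional product measures with weights `w` satisfying
`w(n-1)/w(n) → φ_c ∈ (0,∞]` exhibit condensation, then `φ_c < ∞`,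
`z(φ_c) = Σ w(n) φ_c^n < ∞` and `Z_{L,N}/w(N) → L z(φ_c)^{L-1}`. -/
theorem condensation_characterization (w : ℕ → ℝ) (hw : ∀ n, 0 < w n)
    (φc : ENNReal) (hφpos : 0 < φc)
    (hreg : Tendsto (fun n => ENNReal.ofReal (w n / w (n + 1))) atTop (𝓝 φc))
    (L : ℕ) (hL : 2 ≤ L)
    (hcond : ∃ a : ℕ → ℝ,
      (∀ K : ℕ, Tendsto (fun N => probMaxGe w L N K) atTop (𝓝 (a K))) ∧
      Tendsto a atTop (𝓝 1)) :
    φc < ⊤ ∧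
    (Summable fun n : ℕ => w n * φc.toReal ^ n) ∧
    Tendsto (fun N => Zconv w L N / w N) atTop
      (𝓝 ((L : ℝ) * (∑' n : ℕ, w n * φc.toReal ^ n) ^ (L - 1))) :=
  condensation_characterization_general w hw φc hreg L hL hcond
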